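/- Let N₁ and N₂ be disjoint finite index sets and v_i ∈ ℝ^d (i ∈ N₁ ∪ N₂) fixed vectors. Let Φ be a random vector in ℝ^d satisfying the perturbation assumption with constants b₁, b₂ > 0, and let h_i (i ∈ N₁ ∪ N₂), n₁, n₂, n₃ be mutually independent zero-mean real random variables with finite second moments and E[h_i²] > 0, independent of Φ. Set a_i = 1/E[h_i²]. Then E[Φ ( (∑_{i∈N₁} a_i h_i + n₁)(∑_{i∈N₁} ⟨v_i, Φ⟩ h_i + ∑_{j∈N₂} a_j h_j + n₂) + (∑_{j∈N₂} ⟨v_j, Φ⟩ h_j + n₃)(∑_{i∈N₁} ⟨v_i, Φ⟩ h_i + ∑_{j∈N₂} a_j h_j + n₂) )] = b₁ ∑_{i∈N₁∪N₂} v_i. -/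

import Mathlib

/-!
Regroup the estimator as `(A + n₁ + n₃) (B + n₂)` with `A = ∑ᵢ pilotOrData N₁ a v i Φ * hᵢ` and
`B = ∑ᵢ pilotOrData N₂ a v i Φ * hᵢ`: every device puts its pilot `aᵢ` into one factor and its
data `⟪vᵢ, Φ⟫` into the other. This is a quadratic form `∑ₚ ∑_q αₚ(Φ) β_q(Φ) Yₚ Y_q` in the
independent centred variables `Y = (h, n₁, n₂, n₃)`, with coefficients independent of `Y`, so
only the diagonal `E[Yₚ²] E[αₚ(Φ) βₚ(Φ) Φ]` survives. The noises have `αₚ βₚ = 0`, and device `i`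
contributes `E[hᵢ²] aᵢ E[⟪vᵢ, Φ⟫ Φ] = b₁ vᵢ` because `E[Φ Φᵀ] = b₁ I`.
-/

open MeasureTheory ProbabilityTheory

section QuadraticForm

variable {Ω κ F E : Type*} [MeasurableSpace Ω] {μ : Measure Ω} {Y : κ → Ω → ℝ}

theorem integral_mul_eq_ite_of_iIndepFun [DecidableEq κ] (hY : iIndepFun Y μ)
    (hY2 : ∀ p, MemLp (Y p) 2 μ) (hY0 : ∀ p, ∫ ω, Y p ω ∂μ = 0) (p q : κ) :
    ∫ ω, Y p ω * Y q ω ∂μ = if p = q then ∫ ω, Y p ω ^ 2 ∂μ else 0 := by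
  split_ifs with hpq
  · simp [hpq, sq]
  · rw [(hY.indepFun hpq).integral_fun_mul_eq_mul_integral (hY2 p).aestronglyMeasurable
      (hY2 q).aestronglyMeasurable, hY0 p, zero_mul]

theorem exists_ae_norm_comp_le_of_continuous [NormedAddCommGroup F] [ProperSpace F]
    [NormedAddCommGroup E] {Z : Ω → F} {R : ℝ} (hZR : ∀ᵐ ω ∂μ, ‖Z ω‖ ≤ R) {g : F → E}
    (hg : Continuous g) : ∃ C, ∀ᵐ ω ∂μ, ‖g (Z ω)‖ ≤ C := by
  obtain ⟨C, hC⟩ := (isCompact_closedBall 0 R).exists_bound_of_continuousOn hg.continuousOn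
  exact ⟨C, hZR.mono fun ω hω => hC _ (mem_closedBall_zero_iff.2 hω)⟩

variable [Fintype κ] [DecidableEq κ] [NormedAddCommGroup E] [NormedSpace ℝ E] [MeasurableSpace F]
  {Z : Ω → F}

theorem integral_quadratic_smul_of_indepFun (hY : iIndepFun Y μ)
    (hY2 : ∀ p, MemLp (Y p) 2 μ) (hY0 : ∀ p, ∫ ω, Y p ω ∂μ = 0)
    (hYZ : IndepFun (fun ω p => Y p ω) Z μ) (hZ : AEMeasurable Z μ) (c : κ → κ → F → E)
    (hc : ∀ p q, AEStronglyMeasurable (c p q) (μ.map Z))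
    (hcZ : ∀ p q, ∃ C, ∀ᵐ ω ∂μ, ‖c p q (Z ω)‖ ≤ C) :
    ∫ ω, ∑ p, ∑ q, (Y p ω * Y q ω) • c p q (Z ω) ∂μ =
      ∑ p, (∫ ω, Y p ω ^ 2 ∂μ) • ∫ ω, c p p (Z ω) ∂μ := by
  have hYvec : AEMeasurable (fun ω p => Y p ω) μ :=
    aemeasurable_pi_lambda _ fun p => (hY2 p).aestronglyMeasurable.aemeasurable
  have hterm (p q : κ) : ∫ ω, (Y p ω * Y q ω) • c p q (Z ω) ∂μ =
      (∫ ω, Y p ω * Y q ω ∂μ) • ∫ ω, c p q (Z ω) ∂μ :=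
    hYZ.integral_fun_comp_smul_comp (f := fun y => y p * y q) hYvec hZ (by fun_prop) (hc p q)
  have hint (p q : κ) : Integrable (fun ω => (Y p ω * Y q ω) • c p q (Z ω)) μ := by
    obtain ⟨C, hC⟩ := hcZ p q
    exact ((hY2 p).integrable_mul (hY2 q)).smul_bdd C ((hc p q).comp_aemeasurable hZ) hC
  rw [integral_finsetSum _ fun p _ => integrable_finsetSum _ fun q _ => hint p q]
  refine Finset.sum_congr rfl fun p _ => ?_
  simp_rw [integral_finsetSum _ fun q _ => hint p q, hterm,
    integral_mul_eq_ite_of_iIndepFun hY hY2 hY0, ite_smul, zero_smul,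
    Finset.sum_ite_eq, Finset.mem_univ, if_true]

theorem integral_sum_mul_sum_smul_of_indepFun [NormedAddCommGroup F] [ProperSpace F]
    [BorelSpace F] (hY : iIndepFun Y μ) (hY2 : ∀ p, MemLp (Y p) 2 μ)
    (hY0 : ∀ p, ∫ ω, Y p ω ∂μ = 0) (hYZ : IndepFun (fun ω p => Y p ω) Z μ)
    (hZ : AEMeasurable Z μ) {R : ℝ} (hZR : ∀ᵐ ω ∂μ, ‖Z ω‖ ≤ R) {α β : κ → F → ℝ} {G : F → E}
    (hα : ∀ p, Continuous (α p)) (hβ : ∀ q, Continuous (β q)) (hG : Continuous G) :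
    ∫ ω, ((∑ p, α p (Z ω) * Y p ω) * ∑ q, β q (Z ω) * Y q ω) • G (Z ω) ∂μ =
      ∑ p, (∫ ω, Y p ω ^ 2 ∂μ) • ∫ ω, (α p (Z ω) * β p (Z ω)) • G (Z ω) ∂μ := by
  have hc (p q : κ) : Continuous fun x => (α p x * β q x) • G x :=
    ((hα p).mul (hβ q)).smul hG
  rw [← integral_quadratic_smul_of_indepFun hY hY2 hY0 hYZ hZ _
    (fun p q => (hc p q).aestronglyMeasurable)
    (fun p q => exists_ae_norm_comp_le_of_continuous hZR (hc p q))]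
  congr with ω
  simp_rw [Finset.sum_mul_sum, Finset.sum_smul, smul_smul]
  exact Finset.sum_congr rfl fun p _ => Finset.sum_congr rfl fun q _ => by congr 1; ring

end QuadraticForm

section SumElimFinThree

variable {S A : Type*}

theorem forall_sum_elim_fin_three {P : A → Prop} {f : S → A} {x y z : A} (hf : ∀ i, P (f i))
    (hx : P x) (hy : P y) (hz : P z) : ∀ p, P (Sum.elim f ![x, y, z] p)
  | .inl i => hf i
  | .inr k => by fin_cases k <;> assumption

theorem ProbabilityTheory.IndepFun.sum_elim_fin_three {Ω F : Type*} [MeasurableSpace Ω]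
    {μ : Measure Ω} [MeasurableSpace A] [MeasurableSpace F] {f : S → Ω → A} {x y z : Ω → A}
    {Z : Ω → F} (hind : IndepFun (fun ω => ((fun i => f i ω), x ω, y ω, z ω)) Z μ) :
    IndepFun (fun ω p => Sum.elim f ![x, y, z] p ω) Z μ := by
  have hmeas :
      Measurable fun t : (S → A) × A × A × A => Sum.elim t.1 ![t.2.1, t.2.2.1, t.2.2.2] := by
    refine measurable_pi_lambda _ fun p => ?_
    rcases p with i | k
    · exact (measurable_pi_apply i).comp measurable_fst
    · fin_cases k
      exacts [measurable_snd.fst, measurable_snd.snd.fst, measurable_snd.snd.snd]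
  have hcomp : (fun ω p => Sum.elim f ![x, y, z] p ω) =
      (fun t : (S → A) × A × A × A => Sum.elim t.1 ![t.2.1, t.2.2.1, t.2.2.2]) ∘
        fun ω => ((fun i => f i ω), x ω, y ω, z ω) := by
    ext ω (i | k)
    · rfl
    · fin_cases k <;> rfl
  rw [hcomp]
  exact hind.comp hmeas measurable_id

end SumElimFinThree

section Estimator

variable {ι E : Type*} [DecidableEq ι] [NormedAddCommGroup E] [InnerProductSpace ℝ E]

def pilotOrData (s : Finset ι) (a : ι → ℝ) (v : ι → E) (i : ι) (x : E) : ℝ :=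
  if i ∈ s then a i else inner ℝ (v i) x

variable {s t : Finset ι} {a : ι → ℝ} {v : ι → E}

theorem continuous_pilotOrData (i : ι) : Continuous (pilotOrData s a v i) := by
  unfold pilotOrData
  split_ifs <;> fun_prop

theorem pilotOrData_mul_pilotOrData (hst : Disjoint s t) {i : ι} (hi : i ∈ s ∪ t) (x : E) :
    pilotOrData s a v i x * pilotOrData t a v i x = a i * inner ℝ (v i) x := by
  rcases Finset.mem_union.1 hi with his | hit
  · simp [pilotOrData, his, Finset.disjoint_left.1 hst his]
  · simp [pilotOrData, hit, Finset.disjoint_right.1 hst hit, mul_comm]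

theorem sum_union_pilotOrData_mul (hst : Disjoint s t) (x : E) (g : ι → ℝ) :
    ∑ i ∈ s ∪ t, pilotOrData s a v i x * g i =
      ∑ i ∈ s, a i * g i + ∑ i ∈ t, inner ℝ (v i) x * g i := by
  rw [Finset.sum_union hst]
  congr 1 <;> refine Finset.sum_congr rfl fun i hi => ?_
  · simp [pilotOrData, hi]
  · simp [pilotOrData, Finset.disjoint_right.1 hst hi]

theorem async_estimator_eq_mul (hst : Disjoint s t) (x : E) (g : ι → ℝ) (m₁ m₂ m₃ : ℝ) :
    (∑ i ∈ s, a i * g i + m₁) *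
        (∑ i ∈ s, inner ℝ (v i) x * g i + ∑ j ∈ t, a j * g j + m₂) +
      (∑ j ∈ t, inner ℝ (v j) x * g j + m₃) *
        (∑ i ∈ s, inner ℝ (v i) x * g i + ∑ j ∈ t, a j * g j + m₂) =
      (∑ i ∈ s ∪ t, pilotOrData s a v i x * g i + (m₁ + m₃)) *
        (∑ i ∈ s ∪ t, pilotOrData t a v i x * g i + m₂) := by
  rw [sum_union_pilotOrData_mul hst, Finset.union_comm, sum_union_pilotOrData_mul hst.symm]
  ring

end Estimator

section Perturbation

variable {Ω ι : Type*} [MeasurableSpace Ω] {μ : Measure Ω} {d : ℕ}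
  {Φ : Ω → EuclideanSpace ℝ (Fin d)} {b : ℝ}

theorem integral_inner_smul_eq_smul (hΦ : MemLp Φ 2 μ)
    (hcov : ∀ j l : Fin d, j ≠ l → ∫ ω, Φ ω j * Φ ω l ∂μ = 0)
    (hvar : ∀ j : Fin d, ∫ ω, Φ ω j ^ 2 ∂μ = b) (v : EuclideanSpace ℝ (Fin d)) :
    ∫ ω, inner ℝ v (Φ ω) • Φ ω ∂μ = b • v := by
  have hcoord (j : Fin d) : MemLp (fun ω => Φ ω j) 2 μ :=
    (EuclideanSpace.proj (𝕜 := ℝ) j : EuclideanSpace ℝ (Fin d) →L[ℝ] ℝ).comp_memLp' hΦ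
  have hprod (l j : Fin d) : Integrable (fun ω => Φ ω l * Φ ω j) μ :=
    (hcoord l).integrable_mul (hcoord j)
  have hmoment (l j : Fin d) : ∫ ω, Φ ω l * Φ ω j ∂μ = if l = j then b else 0 := by
    split_ifs with hlj
    · simp [hlj, ← hvar j, sq]
    · exact hcov l j hlj
  have hint : Integrable (fun ω => inner ℝ v (Φ ω) • Φ ω) μ :=
    memLp_one_iff_integrable.1 (hΦ.smul ((innerSL ℝ v).comp_memLp' hΦ))
  ext j
  have hproj := (EuclideanSpace.proj (𝕜 := ℝ) j).integral_comp_comm hint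
  simp only [EuclideanSpace.coe_proj, PiLp.smul_apply, smul_eq_mul] at hproj ⊢
  have hexpand (ω : Ω) : inner ℝ v (Φ ω) * Φ ω j = ∑ l, v l * (Φ ω l * Φ ω j) := by
    simp only [PiLp.inner_apply, RCLike.inner_apply, conj_trivial, Finset.sum_mul]
    exact Finset.sum_congr rfl fun l _ => by ring
  rw [← hproj, integral_congr_ae (.of_forall hexpand),
    integral_finsetSum _ fun l _ => (hprod l j).const_mul (v l)]
  simp_rw [integral_const_mul, hmoment, mul_ite, mul_zero, Finset.sum_ite_eq', Finset.mem_univ,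
    if_true, mul_comm]

theorem integral_pilotOrData_mul_smul [DecidableEq ι] {s t : Finset ι} {a : ι → ℝ}
    {v : ι → EuclideanSpace ℝ (Fin d)} (hst : Disjoint s t) {i : ι} (hi : i ∈ s ∪ t)
    (hΦ : MemLp Φ 2 μ) (hcov : ∀ j l : Fin d, j ≠ l → ∫ ω, Φ ω j * Φ ω l ∂μ = 0)
    (hvar : ∀ j : Fin d, ∫ ω, Φ ω j ^ 2 ∂μ = b) :
    ∫ ω, (pilotOrData s a v i (Φ ω) * pilotOrData t a v i (Φ ω)) • Φ ω ∂μ = a i • b • v i := by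
  simp_rw [pilotOrData_mul_pilotOrData hst hi, mul_smul]
  rw [integral_smul, integral_inner_smul_eq_smul hΦ hcov hvar]

end Perturbation

theorem efofl_async_unbiased_general
    {d : ℕ} {Ω : Type*} [MeasurableSpace Ω] (μ : Measure Ω) [IsProbabilityMeasure μ]
    {ι : Type*} [DecidableEq ι] (N₁ N₂ : Finset ι) (hdisj : Disjoint N₁ N₂)
    (v : ι → EuclideanSpace ℝ (Fin d))
    (b₁ b₂ : ℝ)
    (Φ : Ω → EuclideanSpace ℝ (Fin d)) (hΦmeas : Measurable Φ)
    (hΦcov : ∀ j l : Fin d, j ≠ l → ∫ ω, Φ ω j * Φ ω l ∂μ = 0)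
    (hΦvar : ∀ j : Fin d, ∫ ω, (Φ ω j) ^ 2 ∂μ = b₁)
    (hΦbdd : ∀ᵐ ω ∂μ, ‖Φ ω‖ ≤ b₂)
    (h : ι → Ω → ℝ) (n1 n2 n3 : Ω → ℝ)
    (hL2 : ∀ i ∈ N₁ ∪ N₂, MemLp (h i) 2 μ)
    (hn1L2 : MemLp n1 2 μ) (hn2L2 : MemLp n2 2 μ) (hn3L2 : MemLp n3 2 μ)
    (hmean : ∀ i ∈ N₁ ∪ N₂, ∫ ω, h i ω ∂μ = 0)
    (hn1mean : ∫ ω, n1 ω ∂μ = 0) (hn2mean : ∫ ω, n2 ω ∂μ = 0)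
    (hn3mean : ∫ ω, n3 ω ∂μ = 0)
    (hpos : ∀ i ∈ N₁ ∪ N₂, 0 < ∫ ω, (h i ω) ^ 2 ∂μ)
    (hIndep : iIndepFun
      (Sum.elim (fun i : {j // j ∈ N₁ ∪ N₂} => h i.1) ![n1, n2, n3]) μ)
    (hIndepΦ : IndepFun
      (fun ω => ((fun i : {j // j ∈ N₁ ∪ N₂} => h i.1 ω), n1 ω, n2 ω, n3 ω)) Φ μ)
    (a : ι → ℝ) (ha : ∀ i ∈ N₁ ∪ N₂, a i = (∫ ω, (h i ω) ^ 2 ∂μ)⁻¹) :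
    (∫ ω, ((∑ i ∈ N₁, a i * h i ω + n1 ω) *
          (∑ i ∈ N₁, (inner ℝ (v i) (Φ ω) : ℝ) * h i ω +
            ∑ j ∈ N₂, a j * h j ω + n2 ω) +
        (∑ j ∈ N₂, (inner ℝ (v j) (Φ ω) : ℝ) * h j ω + n3 ω) *
          (∑ i ∈ N₁, (inner ℝ (v i) (Φ ω) : ℝ) * h i ω +
            ∑ j ∈ N₂, a j * h j ω + n2 ω)) • Φ ω ∂μ) =
      b₁ • ∑ i ∈ N₁ ∪ N₂, v i := by
  set Y := Sum.elim (fun i : {j // j ∈ N₁ ∪ N₂} => h i.1) ![n1, n2, n3]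
  set α : {j // j ∈ N₁ ∪ N₂} ⊕ Fin 3 → EuclideanSpace ℝ (Fin d) → ℝ :=
    Sum.elim (fun i => pilotOrData N₁ a v i.1) ![1, 0, 1]
  set β : {j // j ∈ N₁ ∪ N₂} ⊕ Fin 3 → EuclideanSpace ℝ (Fin d) → ℝ :=
    Sum.elim (fun i => pilotOrData N₂ a v i.1) ![0, 1, 0]
  have hY2 : ∀ p, MemLp (Y p) 2 μ :=
    forall_sum_elim_fin_three (P := (MemLp · 2 μ)) (fun i => hL2 _ i.2) hn1L2 hn2L2 hn3L2
  have hY0 : ∀ p, ∫ ω, Y p ω ∂μ = 0 :=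
    forall_sum_elim_fin_three (P := fun g : Ω → ℝ => ∫ ω, g ω ∂μ = 0) (fun i => hmean _ i.2)
      hn1mean hn2mean hn3mean
  have hα : ∀ p, Continuous (α p) := forall_sum_elim_fin_three
    (fun _ => continuous_pilotOrData _) continuous_const continuous_const continuous_const
  have hβ : ∀ p, Continuous (β p) := forall_sum_elim_fin_three
    (fun _ => continuous_pilotOrData _) continuous_const continuous_const continuous_const
  have hΦ2 : MemLp Φ 2 μ :=
    (memLp_top_of_bound hΦmeas.aestronglyMeasurable b₂ hΦbdd).mono_exponent le_top
  calc _ = ∫ ω, ((∑ p, α p (Φ ω) * Y p ω) * ∑ q, β q (Φ ω) * Y q ω) • Φ ω ∂μ := by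
        refine integral_congr_ae (.of_forall fun ω => ?_)
        dsimp only
        rw [async_estimator_eq_mul hdisj]
        simp only [α, β, Y, Fintype.sum_sum_type, Sum.elim_inl, Sum.elim_inr, Fin.sum_univ_three,
          Matrix.cons_val, Pi.one_apply, Pi.zero_apply, one_mul, zero_mul, add_zero, zero_add]
        rw [Finset.sum_coe_sort (N₁ ∪ N₂) (fun i => pilotOrData N₁ a v i (Φ ω) * h i ω),
          Finset.sum_coe_sort (N₁ ∪ N₂) (fun i => pilotOrData N₂ a v i (Φ ω) * h i ω)]
    _ = ∑ p, (∫ ω, Y p ω ^ 2 ∂μ) • ∫ ω, (α p (Φ ω) * β p (Φ ω)) • Φ ω ∂μ :=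
        integral_sum_mul_sum_smul_of_indepFun hIndep hY2 hY0 hIndepΦ.sum_elim_fin_three
          hΦmeas.aemeasurable hΦbdd hα hβ continuous_id
    _ = ∑ i ∈ N₁ ∪ N₂, b₁ • v i := by
        rw [Fintype.sum_sum_type, Fin.sum_univ_three, ← Finset.sum_coe_sort (N₁ ∪ N₂)]
        simp only [α, β, Y, Sum.elim_inl, Sum.elim_inr, Matrix.cons_val, Pi.one_apply,
          Pi.zero_apply, mul_zero, zero_mul, zero_smul, integral_zero, smul_zero, add_zero]
        refine Fintype.sum_congr _ _ fun i => ?_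
        rw [integral_pilotOrData_mul_smul hdisj i.2 hΦ2 hΦcov hΦvar, smul_smul, ha i i.2,
          mul_inv_cancel₀ (hpos i i.2).ne', one_smul]
    _ = b₁ • ∑ i ∈ N₁ ∪ N₂, v i := Finset.smul_sum.symm

/-- Unbiasedness of the asynchronous EFOFL gradient estimate: with a perturbation vector
`Φ` (constants `b₁, b₂`), zero-mean mutually independent channels `h_i` (`i ∈ N₁ ∪ N₂`,
`N₁, N₂` disjoint) and noises `n₁, n₂, n₃`, all independent of `Φ`, and pilots
`a_i = 1/E[h_i²]`, the three-slot estimator satisfies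
`E[Φ ((∑_{N₁} aᵢhᵢ + n₁)(∑_{N₁} ⟨vᵢ,Φ⟩hᵢ + ∑_{N₂} aⱼhⱼ + n₂)
  + (∑_{N₂} ⟨vⱼ,Φ⟩hⱼ + n₃)(∑_{N₁} ⟨vᵢ,Φ⟩hᵢ + ∑_{N₂} aⱼhⱼ + n₂))] = b₁ ∑_{N₁∪N₂} vᵢ`. -/
theorem efofl_async_unbiased
    {d : ℕ} {Ω : Type*} [MeasurableSpace Ω] (μ : Measure Ω) [IsProbabilityMeasure μ]
    {ι : Type*} [DecidableEq ι] (N₁ N₂ : Finset ι) (hdisj : Disjoint N₁ N₂)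
    (v : ι → EuclideanSpace ℝ (Fin d))
    (b₁ b₂ : ℝ) (hb₁ : 0 < b₁) (hb₂ : 0 < b₂)
    (Φ : Ω → EuclideanSpace ℝ (Fin d)) (hΦmeas : Measurable Φ)
    (hΦcov : ∀ j l : Fin d, j ≠ l → ∫ ω, Φ ω j * Φ ω l ∂μ = 0)
    (hΦvar : ∀ j : Fin d, ∫ ω, (Φ ω j) ^ 2 ∂μ = b₁)
    (hΦbdd : ∀ᵐ ω ∂μ, ‖Φ ω‖ ≤ b₂)
    (h : ι → Ω → ℝ) (n1 n2 n3 : Ω → ℝ)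
    (hmeas : ∀ i ∈ N₁ ∪ N₂, Measurable (h i))
    (hn1 : Measurable n1) (hn2 : Measurable n2) (hn3 : Measurable n3)
    (hL2 : ∀ i ∈ N₁ ∪ N₂, MemLp (h i) 2 μ)
    (hn1L2 : MemLp n1 2 μ) (hn2L2 : MemLp n2 2 μ) (hn3L2 : MemLp n3 2 μ)
    (hmean : ∀ i ∈ N₁ ∪ N₂, ∫ ω, h i ω ∂μ = 0)
    (hn1mean : ∫ ω, n1 ω ∂μ = 0) (hn2mean : ∫ ω, n2 ω ∂μ = 0)
    (hn3mean : ∫ ω, n3 ω ∂μ = 0)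
    (hpos : ∀ i ∈ N₁ ∪ N₂, 0 < ∫ ω, (h i ω) ^ 2 ∂μ)
    (hIndep : iIndepFun
      (Sum.elim (fun i : {j // j ∈ N₁ ∪ N₂} => h i.1) ![n1, n2, n3]) μ)
    (hIndepΦ : IndepFun
      (fun ω => ((fun i : {j // j ∈ N₁ ∪ N₂} => h i.1 ω), n1 ω, n2 ω, n3 ω)) Φ μ)
    (a : ι → ℝ) (ha : ∀ i ∈ N₁ ∪ N₂, a i = (∫ ω, (h i ω) ^ 2 ∂μ)⁻¹) :
    (∫ ω, ((∑ i ∈ N₁, a i * h i ω + n1 ω) *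
          (∑ i ∈ N₁, (inner ℝ (v i) (Φ ω) : ℝ) * h i ω +
            ∑ j ∈ N₂, a j * h j ω + n2 ω) +
        (∑ j ∈ N₂, (inner ℝ (v j) (Φ ω) : ℝ) * h j ω + n3 ω) *
          (∑ i ∈ N₁, (inner ℝ (v i) (Φ ω) : ℝ) * h i ω +
            ∑ j ∈ N₂, a j * h j ω + n2 ω)) • Φ ω ∂μ) =
      b₁ • ∑ i ∈ N₁ ∪ N₂, v i :=
  efofl_async_unbiased_general μ N₁ N₂ hdisj v b₁ b₂ Φ hΦmeas hΦcov hΦvar hΦbdd h n1 n2 n3 hL2 hn1L2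
    hn2L2 hn3L2 hmean hn1mean hn2mean hn3mean hpos hIndep hIndepΦ a ha
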